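/- Let L/K be a finite Galois field extension with group Γ. Then the K-algebra map L ⊗_K L → ∏_{γ∈Γ} L sending a ⊗ b to the tuple (a·γ(b))_{γ∈Γ} is an isomorphism of K-algebras. -/

import Mathlib

/-!
Viewed as an `L`-linear map for the `L`-structure on the left factor, `Φ` sends `1 ⊗ b` to the
orbit tuple `(γ b)_γ`. By Dedekind's independence of characters these tuples span `Γ → L` over
`L`, so `Φ` is surjective; since `|Γ| = [L : K]`, both sides have `K`-dimension `[L : K]²`, and
surjectivity gives bijectivity.
-/

open scoped TensorProduct

theorem AlgEquiv.linearIndependent_coeFn (K L : Type*) [Field K] [Field L] [Algebra K L] :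
    LinearIndependent L (fun γ : L ≃ₐ[K] L => (γ : L → L)) :=
  (linearIndependent_monoidHom L L).comp (fun γ : L ≃ₐ[K] L => (γ : L →* L))
    fun _ _ h => AlgEquiv.ext fun x => DFunLike.congr_fun h x

section FiniteDimensional

variable (K L : Type*) [Field K] [Field L] [Algebra K L] [FiniteDimensional K L]

theorem AlgEquiv.span_range_orbit_eq_top :
    Submodule.span L (Set.range fun (b : L) (γ : L ≃ₐ[K] L) => γ b) = ⊤ :=
  span_flip_eq_top_iff_linearIndependent.mpr (AlgEquiv.linearIndependent_coeFn K L)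

variable {K L}

theorem AlgHom.surjective_of_apply_tmul_eq_orbit (Φ : L ⊗[K] L →ₐ[K] ((L ≃ₐ[K] L) → L))
    (hΦ : ∀ a b : L, Φ (a ⊗ₜ[K] b) = fun γ : L ≃ₐ[K] L => a * γ b) :
    Function.Surjective Φ := by
  have hsmul (a : L) (t : L ⊗[K] L) : Φ (a • t) = a • Φ t := by
    rw [Algebra.smul_def, map_mul, Algebra.TensorProduct.algebraMap_apply, hΦ]
    ext γ
    simp
  let Ψ : L ⊗[K] L →ₗ[L] ((L ≃ₐ[K] L) → L) :=
    { toFun := Φ, map_add' := map_add Φ, map_smul' := hsmul }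
  suffices LinearMap.range Ψ = ⊤ from LinearMap.range_eq_top.mp this
  rw [eq_top_iff, ← AlgEquiv.span_range_orbit_eq_top K L, Submodule.span_le]
  rintro _ ⟨b, rfl⟩
  exact ⟨1 ⊗ₜ b, by simp [Ψ, hΦ]⟩

theorem IsGalois.finrank_tensorProduct_self_eq_finrank_pi [IsGalois K L] :
    Module.finrank K (L ⊗[K] L) = Module.finrank K ((L ≃ₐ[K] L) → L) := by
  rw [Module.finrank_tensorProduct, Module.finrank_pi_fintype, Finset.sum_const,
    Finset.card_univ, ← Nat.card_eq_fintype_card, IsGalois.card_aut_eq_finrank, smul_eq_mul]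

end FiniteDimensional

theorem stmt5 (K L : Type*) [Field K] [Field L] [Algebra K L]
    [FiniteDimensional K L] [IsGalois K L]
    (Φ : L ⊗[K] L →ₐ[K] ((L ≃ₐ[K] L) → L))
    (hΦ : ∀ a b : L, Φ (a ⊗ₜ[K] b) = fun γ : L ≃ₐ[K] L => a * γ b) :
    Function.Bijective Φ := by
  have hsurj := AlgHom.surjective_of_apply_tmul_eq_orbit Φ hΦ
  have hinj : Function.Injective Φ.toLinearMap :=
    (LinearMap.injective_iff_surjective_of_finrank_eq_finrank
      IsGalois.finrank_tensorProduct_self_eq_finrank_pi).mpr hsurj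
  exact ⟨hinj, hsurj⟩
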